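/- (John–Nirenberg inequality) Let M be a continuous martingale with M₀ = 0 on a filtered probability space, and suppose its BMO₂ norm satisfies ‖M‖_{BMO₂} < 1, i.e. ess sup over stopping times τ of E[⟨M⟩_∞ − ⟨M⟩_τ | F_τ] ≤ ‖M‖²_{BMO₂} < 1. Then for every stopping time τ, E[exp(⟨M⟩_∞ − ⟨M⟩_τ) | F_τ] ≤ 1/(1 − ‖M‖²_{BMO₂}) almost surely. -/

import Mathlib

/-!
Write `X_ρ = A_∞ - A_ρ`. The BMO hypothesis gives `∫_T X_ρ ≤ b μ(T)` for every stopping time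
`ρ ≥ τ` and `T ∈ 𝓕_ρ`, and this self-improves to `∫_T X_ρⁿ ≤ n! bⁿ μ(T)`. For the induction step
write `X^(n+1) = (n+1) ∫₀^∞ (X - s)₊ⁿ ds`. On the event that `A` rises by `s` after `ρ`, the
quantity `X_ρ - s` equals `X_σ`, where `σ` is the stopping time at which the rise happens. So the
induction hypothesis at `σ` bounds `∫_T (X_ρ - s)₊ⁿ` by `n! bⁿ μ(T ∩ {X_ρ ≥ s})`, and integrating
in `s` gives `n! bⁿ ∫_T X_ρ ≤ n! bⁿ⁺¹ μ(T)`. Summing the exponential series then gives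
`∫_T exp X_τ ≤ (1 - b)⁻¹ μ(T)` for all `T ∈ 𝓕_τ`, which is the conditional bound.
-/

open MeasureTheory Filter Set Topology
open scoped ENNReal

namespace JohnNirenberg

variable {Ω : Type*}

lemma lintegral_indicator_Iio_pow_sub (n : ℕ) {x : ℝ} (hx : 0 ≤ x) :
    (n + 1 : ℝ≥0∞) * ∫⁻ s in Ioi 0, (Iio x).indicator (fun s => ENNReal.ofReal ((x - s) ^ n)) s =
      ENNReal.ofReal (x ^ (n + 1)) := by
  have hint : ∫ s in Ioo 0 x, (x - s) ^ n = x ^ (n + 1) / (n + 1) := by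
    rw [← integral_Ioc_eq_integral_Ioo, ← intervalIntegral.integral_of_le hx,
      intervalIntegral.integral_comp_sub_left (fun u => u ^ n) x, sub_self, sub_zero, integral_pow]
    simp
  have hint' : IntegrableOn (fun s : ℝ => (x - s) ^ n) (Ioo 0 x) :=
    (Continuous.integrableOn_Icc (by fun_prop)).mono_set Ioo_subset_Icc_self
  have hnn : 0 ≤ᵐ[volume.restrict (Ioo 0 x)] fun s : ℝ => (x - s) ^ n := by
    filter_upwards [ae_restrict_mem measurableSet_Ioo] with s hs
    exact pow_nonneg (by linarith [hs.2]) n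
  rw [setLIntegral_indicator measurableSet_Iio, Iio_inter_Ioi,
    ← ofReal_integral_eq_lintegral_ofReal hint' hnn, hint,
    show (n + 1 : ℝ≥0∞) = ENNReal.ofReal (n + 1) by norm_cast, ← ENNReal.ofReal_mul (by positivity)]
  congr 1
  field_simp

lemma ofReal_exp_eq_tsum {x : ℝ} (hx : 0 ≤ x) :
    ENNReal.ofReal (Real.exp x) = ∑' n : ℕ, ENNReal.ofReal (x ^ n) / n.factorial := by
  rw [Real.exp_eq_exp_ℝ, NormedSpace.exp_eq_tsum_div, ENNReal.ofReal_tsum_of_nonneg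
    (fun n => by positivity) (Real.summable_pow_div_factorial x)]
  congr 1 with n
  rw [ENNReal.ofReal_div_of_pos (by positivity), ENNReal.ofReal_natCast]

lemma lintegral_ofReal_exp_le {m : MeasurableSpace Ω} {μ : Measure Ω} {X : Ω → ℝ} {c K : ℝ≥0∞}
    (hX : AEMeasurable X μ) (hX0 : 0 ≤ᵐ[μ] X)
    (hmom : ∀ n : ℕ, ∫⁻ ω, ENNReal.ofReal (X ω ^ n) ∂μ ≤ n.factorial * c ^ n * K) :
    ∫⁻ ω, ENNReal.ofReal (Real.exp (X ω)) ∂μ ≤ (1 - c)⁻¹ * K := by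
  calc ∫⁻ ω, ENNReal.ofReal (Real.exp (X ω)) ∂μ
      = ∫⁻ ω, ∑' n : ℕ, ENNReal.ofReal (X ω ^ n) / n.factorial ∂μ :=
        lintegral_congr_ae (hX0.mono fun ω hω => ofReal_exp_eq_tsum hω)
    _ = ∑' n : ℕ, (∫⁻ ω, ENNReal.ofReal (X ω ^ n) ∂μ) / n.factorial := by
        rw [lintegral_tsum fun n => ((hX.pow_const n).ennreal_ofReal).div_const _]
        simp_rw [div_eq_mul_inv]
        congr 1 with n
        exact lintegral_mul_const' _ _ (by simp [Nat.factorial_ne_zero])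
    _ ≤ ∑' n : ℕ, c ^ n * K := ENNReal.tsum_le_tsum fun n =>
        ENNReal.div_le_of_le_mul' ((hmom n).trans_eq (mul_assoc _ _ _))
    _ = (1 - c)⁻¹ * K := by rw [ENNReal.tsum_mul_right, ENNReal.tsum_geometric]

section CondExp

variable {m m₀ : MeasurableSpace Ω} {μ : Measure Ω} [IsFiniteMeasure μ] {f : Ω → ℝ} {c : ℝ}

lemma setLIntegral_le_of_condExp_le (hm : m ≤ m₀) (hf : Integrable f μ) (hf0 : 0 ≤ᵐ[μ] f)
    (hc : 0 ≤ c) (h : ∀ᵐ ω ∂μ, μ[f | m] ω ≤ c) {S : Set Ω} (hS : MeasurableSet[m] S) :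
    ∫⁻ ω in S, ENNReal.ofReal (f ω) ∂μ ≤ ENNReal.ofReal c * μ S := by
  calc ∫⁻ ω in S, ENNReal.ofReal (f ω) ∂μ
      = ENNReal.ofReal (∫ ω in S, μ[f | m] ω ∂μ) := by
        rw [setIntegral_condExp hm hf hS,
          ofReal_integral_eq_lintegral_ofReal hf.integrableOn (ae_restrict_of_ae hf0)]
    _ ≤ ENNReal.ofReal (∫ _ in S, c ∂μ) := ENNReal.ofReal_le_ofReal <|
        integral_mono_ae integrable_condExp.integrableOn (integrable_const c) (ae_restrict_of_ae h)
    _ = ENNReal.ofReal c * μ S := by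
        rw [setIntegral_const, smul_eq_mul, mul_comm, ENNReal.ofReal_mul hc, measureReal_def,
          ENNReal.ofReal_toReal (measure_ne_top μ S)]

lemma condExp_le_of_forall_setLIntegral_le (hm : m ≤ m₀) (hf : Integrable f μ)
    (hf0 : 0 ≤ᵐ[μ] f) (hc : 0 ≤ c)
    (h : ∀ S, MeasurableSet[m] S → ∫⁻ ω in S, ENNReal.ofReal (f ω) ∂μ ≤ ENNReal.ofReal c * μ S) :
    ∀ᵐ ω ∂μ, μ[f | m] ω ≤ c := by
  have hset : ∀ S, MeasurableSet[m] S → ∫ ω in S, f ω ∂μ ≤ c * μ.real S := fun S hS => by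
    rw [integral_eq_lintegral_of_nonneg_ae (ae_restrict_of_ae hf0) hf.aestronglyMeasurable.restrict,
      measureReal_def, ← ENNReal.toReal_ofReal hc, ← ENNReal.toReal_mul]
    exact ENNReal.toReal_mono (by finiteness) (h S hS)
  refine ae_of_ae_trim hm <| ae_le_of_forall_setIntegral_le (μ := μ.trim hm)
    (integrable_condExp.trim hm stronglyMeasurable_condExp) (integrable_const c) fun S hS _ => ?_
  rw [← setIntegral_trim hm stronglyMeasurable_condExp hS, setIntegral_condExp hm hf hS,
    setIntegral_const, smul_eq_mul, mul_comm, measureReal_def, trim_measurableSet_eq hm hS]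
  exact hset S hS

end CondExp

section RiseTime

variable {A : ℝ → Ω → ℝ} {ρ : Ω → ℝ} {s N t : ℝ} {ω : Ω}

def riseTimes (A : ℝ → Ω → ℝ) (ρ : Ω → ℝ) (s : ℝ) (ω : Ω) : Set ℝ :=
  {t | ρ ω ≤ t ∧ A (ρ ω) ω + s ≤ A t ω}

def riseEvent (A : ℝ → Ω → ℝ) (ρ : Ω → ℝ) (s N : ℝ) : Set Ω :=
  {ω | N ∈ riseTimes A ρ s ω}

open Classical in
/-- Capped at `max ρ N` when `A` has not risen by `s` by time `N`, so that it is a real-valued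
stopping time. -/
noncomputable def riseTime (A : ℝ → Ω → ℝ) (ρ : Ω → ℝ) (s N : ℝ) (ω : Ω) : ℝ :=
  if ω ∈ riseEvent A ρ s N then sInf (riseTimes A ρ s ω) else max (ρ ω) N

lemma bddBelow_riseTimes : BddBelow (riseTimes A ρ s ω) :=
  ⟨ρ ω, fun _ ht => ht.1⟩

lemma mem_riseTimes_of_le (hAm : Monotone fun t => A t ω) (ht : t ∈ riseTimes A ρ s ω)
    {t' : ℝ} (htt' : t ≤ t') : t' ∈ riseTimes A ρ s ω :=
  ⟨ht.1.trans htt', ht.2.trans (hAm htt')⟩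

lemma riseEvent_mono (hAm : ∀ ω, Monotone fun t => A t ω) :
    Monotone (riseEvent A ρ s) :=
  fun _ _ hNN' _ hω => mem_riseTimes_of_le (hAm _) hω hNN'

lemma riseTime_of_mem (h : ω ∈ riseEvent A ρ s N) :
    riseTime A ρ s N ω = sInf (riseTimes A ρ s ω) :=
  if_pos h

lemma riseTime_of_notMem (h : ω ∉ riseEvent A ρ s N) : riseTime A ρ s N ω = max (ρ ω) N :=
  if_neg h

lemma riseTime_le_of_mem (h : ω ∈ riseEvent A ρ s N) (ht : t ∈ riseTimes A ρ s ω) :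
    riseTime A ρ s N ω ≤ t := by
  rw [riseTime_of_mem h]
  exact csInf_le bddBelow_riseTimes ht

lemma le_riseTime : ρ ω ≤ riseTime A ρ s N ω := by
  by_cases h : ω ∈ riseEvent A ρ s N
  · rw [riseTime_of_mem h]
    exact le_csInf ⟨N, h⟩ fun _ ht => ht.1
  · rw [riseTime_of_notMem h]
    exact le_max_left _ _

lemma riseTime_mem_riseTimes (hAc : Continuous fun t => A t ω) (h : ω ∈ riseEvent A ρ s N) :
    riseTime A ρ s N ω ∈ riseTimes A ρ s ω := by
  rw [riseTime_of_mem h]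
  exact (isClosed_Ici.inter (isClosed_Ici.preimage hAc)).csInf_mem ⟨N, h⟩ bddBelow_riseTimes

lemma riseTime_le_iff (hAc : Continuous fun t => A t ω) (hAm : Monotone fun t => A t ω)
    (h : ω ∈ riseEvent A ρ s N) : riseTime A ρ s N ω ≤ t ↔ t ∈ riseTimes A ρ s ω :=
  ⟨mem_riseTimes_of_le hAm (riseTime_mem_riseTimes hAc h), riseTime_le_of_mem h⟩

lemma apply_riseTime (hAc : Continuous fun t => A t ω) (hs : 0 ≤ s)
    (h : ω ∈ riseEvent A ρ s N) : A (riseTime A ρ s N ω) ω = A (ρ ω) ω + s := by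
  obtain ⟨hρσ, hσ⟩ := riseTime_mem_riseTimes hAc h
  obtain ⟨u, hu, hAu⟩ :=
    intermediate_value_Icc hρσ hAc.continuousOn ⟨le_add_of_nonneg_right hs, hσ⟩
  have hσu : riseTime A ρ s N ω ≤ u := riseTime_le_of_mem h ⟨hu.1, hAu.ge⟩
  rw [← le_antisymm hu.2 hσu]
  exact hAu

lemma setOf_riseTime_le (hAc : ∀ ω, Continuous fun t => A t ω)
    (hAm : ∀ ω, Monotone fun t => A t ω) (t : ℝ) :
    {ω | riseTime A ρ s N ω ≤ t} =
      {ω | t ∈ riseTimes A ρ s ω} ∪ (riseEvent A ρ s N)ᶜ ∩ {ω | ρ ω ≤ t ∧ N ≤ t} := by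
  ext ω
  by_cases h : ω ∈ riseEvent A ρ s N
  · simp [riseTime_le_iff (hAc ω) (hAm ω) h, h]
  · have hlt : t ∈ riseTimes A ρ s ω → N ≤ t := fun ht =>
      not_lt.1 fun htN => h (mem_riseTimes_of_le (hAm ω) ht htN.le)
    simp only [mem_ofPred_eq, riseTime_of_notMem h, max_le_iff, mem_union, mem_inter_iff,
      mem_compl_iff, h, not_false_eq_true, true_and]
    exact ⟨Or.inr, fun h' => h'.elim (fun ht => ⟨ht.1, hlt ht⟩) id⟩

variable {m : MeasurableSpace Ω} {ℱ : Filtration ℝ m}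

lemma measurableSet_mem_riseTimes (hA : IsStronglyProgressive ℱ A)
    (hρ : IsStoppingTime ℱ fun ω => (ρ ω : WithTop ℝ)) (t : ℝ) :
    MeasurableSet[ℱ t] {ω | t ∈ riseTimes A ρ s ω} := by
  have hρt : MeasurableSet[ℱ t] {ω | ρ ω ≤ t} := by simpa using hρ.measurableSet_le t
  have hAρ : Measurable[ℱ t] (stoppedValue A fun ω => min (ρ ω : WithTop ℝ) t) :=
    (stronglyMeasurable_stoppedValue_of_le hA (hρ.min_const t) fun _ => min_le_right _ _).measurable
  convert hρt.inter (measurableSet_le (hAρ.add_const s) (hA.stronglyAdapted t).measurable) using 1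
  ext ω
  simp only [riseTimes, mem_ofPred_eq, mem_inter_iff, and_congr_right_iff]
  intro hρt
  simp [stoppedValue, hρt]

lemma measurableSet_riseEvent (hA : IsStronglyProgressive ℱ A)
    (hρ : IsStoppingTime ℱ fun ω => (ρ ω : WithTop ℝ)) :
    MeasurableSet[ℱ N] (riseEvent A ρ s N) :=
  measurableSet_mem_riseTimes hA hρ N

lemma isStoppingTime_riseTime (hA : IsStronglyProgressive ℱ A)
    (hAc : ∀ ω, Continuous fun t => A t ω) (hAm : ∀ ω, Monotone fun t => A t ω)
    (hρ : IsStoppingTime ℱ fun ω => (ρ ω : WithTop ℝ)) :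
    IsStoppingTime ℱ fun ω => (riseTime A ρ s N ω : WithTop ℝ) := by
  intro t
  simp only [WithTop.coe_le_coe]
  rw [setOf_riseTime_le hAc hAm]
  refine (measurableSet_mem_riseTimes hA hρ t).union ?_
  by_cases hN : N ≤ t
  · simpa [hN] using ((ℱ.mono hN _ (measurableSet_riseEvent hA hρ)).compl).inter
      (show MeasurableSet[ℱ t] {ω | ρ ω ≤ t} by simpa using hρ.measurableSet_le t)
  · simp [hN]

lemma measurableSet_riseEvent_of_riseTime (hA : IsStronglyProgressive ℱ A)
    (hAc : ∀ ω, Continuous fun t => A t ω) (hAm : ∀ ω, Monotone fun t => A t ω)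
    (hρ : IsStoppingTime ℱ fun ω => (ρ ω : WithTop ℝ)) :
    MeasurableSet[(isStoppingTime_riseTime (N := N) (s := s) hA hAc hAm hρ).measurableSpace]
      (riseEvent A ρ s N) := by
  refine ⟨le_iSup (fun t => ℱ t) N _ (measurableSet_riseEvent hA hρ), fun t => ?_⟩
  simp only [WithTop.coe_le_coe]
  have heq : riseEvent A ρ s N ∩ {ω | riseTime A ρ s N ω ≤ t} =
      riseEvent A ρ s N ∩ {ω | t ∈ riseTimes A ρ s ω} := by
    rw [setOf_riseTime_le hAc hAm]
    ext ω
    simp only [mem_inter_iff, mem_union, mem_compl_iff]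
    tauto
  rw [heq]
  by_cases hN : N ≤ t
  · exact (ℱ.mono hN _ (measurableSet_riseEvent hA hρ)).inter (measurableSet_mem_riseTimes hA hρ t)
  · have hsub : {ω | t ∈ riseTimes A ρ s ω} ⊆ riseEvent A ρ s N :=
      fun ω ht => mem_riseTimes_of_le (hAm ω) ht (not_le.1 hN).le
    rw [inter_eq_self_of_subset_right hsub]
    exact measurableSet_mem_riseTimes hA hρ t

end RiseTime

section Moments

variable {m : MeasurableSpace Ω} {ℱ : Filtration ℝ m} {μ : Measure Ω} {A : ℝ → Ω → ℝ}
  {Ainf τ ρ : Ω → ℝ} {n : ℕ} {c C : ℝ≥0∞}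

def tail (A : ℝ → Ω → ℝ) (Ainf ρ : Ω → ℝ) (ω : Ω) : ℝ :=
  Ainf ω - A (ρ ω) ω

lemma ae_le_of_tendsto (hAm : ∀ ω, Monotone fun t => A t ω)
    (hAinf : ∀ᵐ ω ∂μ, Tendsto (fun t => A t ω) atTop (𝓝 (Ainf ω))) :
    ∀ᵐ ω ∂μ, ∀ t, A t ω ≤ Ainf ω :=
  hAinf.mono fun ω h t => (hAm ω).ge_of_tendsto h t

lemma ae_tail_nonneg (hAm : ∀ ω, Monotone fun t => A t ω)
    (hAinf : ∀ᵐ ω ∂μ, Tendsto (fun t => A t ω) atTop (𝓝 (Ainf ω))) :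
    0 ≤ᵐ[μ] tail A Ainf ρ :=
  (ae_le_of_tendsto hAm hAinf).mono fun _ h => sub_nonneg.2 (h _)

lemma aemeasurable_tail (hA : IsStronglyProgressive ℱ A)
    (hAinf : ∀ᵐ ω ∂μ, Tendsto (fun t => A t ω) atTop (𝓝 (Ainf ω)))
    (hρ : IsStoppingTime ℱ fun ω => (ρ ω : WithTop ℝ)) :
    AEMeasurable (tail A Ainf ρ) μ := by
  have hAinf_meas : AEMeasurable Ainf μ :=
    aemeasurable_of_tendsto_metrizable_ae atTop
      (fun n : ℕ => ((hA.stronglyAdapted n).measurable.mono (ℱ.le n) le_rfl).aemeasurable)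
      (hAinf.mono fun ω h => h.comp tendsto_natCast_atTop_atTop)
  exact hAinf_meas.sub
    ((measurable_stoppedValue hA hρ).mono hρ.measurableSpace_le le_rfl).aemeasurable

def TailMomentLE (ℱ : Filtration ℝ m) (μ : Measure Ω) (A : ℝ → Ω → ℝ) (Ainf τ : Ω → ℝ) (n : ℕ)
    (C : ℝ≥0∞) : Prop :=
  ∀ (ρ : Ω → ℝ) (hρ : IsStoppingTime ℱ fun ω => (ρ ω : WithTop ℝ)), τ ≤ ρ →
    ∀ T, MeasurableSet[hρ.measurableSpace] T →
      ∫⁻ ω in T, ENNReal.ofReal (tail A Ainf ρ ω ^ n) ∂μ ≤ C * μ T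

lemma TailMomentLE.setLIntegral_riseEvent_le (hn : TailMomentLE ℱ μ A Ainf τ n C)
    (hA : IsStronglyProgressive ℱ A) (hAc : ∀ ω, Continuous fun t => A t ω)
    (hAm : ∀ ω, Monotone fun t => A t ω) (hρ : IsStoppingTime ℱ fun ω => (ρ ω : WithTop ℝ))
    (hτρ : τ ≤ ρ) {T : Set Ω} (hT : MeasurableSet[hρ.measurableSpace] T) {s : ℝ} (hs : 0 ≤ s)
    (N : ℝ) :
    ∫⁻ ω in riseEvent A ρ s N ∩ T, ENNReal.ofReal ((tail A Ainf ρ ω - s) ^ n) ∂μ ≤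
      C * μ (riseEvent A ρ s N ∩ T) := by
  have hσ := isStoppingTime_riseTime (s := s) (N := N) hA hAc hAm hρ
  have hET : MeasurableSet[hσ.measurableSpace] (riseEvent A ρ s N ∩ T) :=
    (measurableSet_riseEvent_of_riseTime hA hAc hAm hρ).inter
      (hρ.measurableSpace_mono hσ (fun ω => WithTop.coe_le_coe.2 le_riseTime) T hT)
  calc ∫⁻ ω in riseEvent A ρ s N ∩ T, ENNReal.ofReal ((tail A Ainf ρ ω - s) ^ n) ∂μ
      = ∫⁻ ω in riseEvent A ρ s N ∩ T,
          ENNReal.ofReal (tail A Ainf (riseTime A ρ s N) ω ^ n) ∂μ := by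
        refine setLIntegral_congr_fun (hσ.measurableSpace_le _ hET) fun ω hω => ?_
        rw [tail, tail, apply_riseTime (hAc ω) hs hω.1, sub_add_eq_sub_sub]
    _ ≤ C * μ (riseEvent A ρ s N ∩ T) :=
        hn _ hσ (fun ω => (hτρ ω).trans le_riseTime) _ hET

lemma TailMomentLE.setLIntegral_indicator_le (hn : TailMomentLE ℱ μ A Ainf τ n C)
    (hA : IsStronglyProgressive ℱ A) (hAc : ∀ ω, Continuous fun t => A t ω)
    (hAm : ∀ ω, Monotone fun t => A t ω)
    (hAinf : ∀ᵐ ω ∂μ, Tendsto (fun t => A t ω) atTop (𝓝 (Ainf ω)))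
    (hρ : IsStoppingTime ℱ fun ω => (ρ ω : WithTop ℝ)) (hτρ : τ ≤ ρ) {T : Set Ω}
    (hT : MeasurableSet[hρ.measurableSpace] T) {s : ℝ} (hs : 0 ≤ s) :
    ∫⁻ ω in T, {ω | s < tail A Ainf ρ ω}.indicator
        (fun ω => ENNReal.ofReal ((tail A Ainf ρ ω - s) ^ n)) ω ∂μ ≤
      C * μ.restrict T {ω | s ≤ tail A Ainf ρ ω} := by
  set g := fun ω => ENNReal.ofReal ((tail A Ainf ρ ω - s) ^ n)
  have hg : AEMeasurable g (μ.restrict T) :=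
    (((aemeasurable_tail hA hAinf hρ).sub_const s).pow_const n).ennreal_ofReal.restrict
  have hE (N : ℕ) : MeasurableSet (riseEvent A ρ s N) :=
    ℱ.le _ _ (measurableSet_riseEvent hA hρ)
  have hcover : ∀ᵐ ω ∂μ, {ω | s < tail A Ainf ρ ω}.indicator g ω ≤
      ⨆ N : ℕ, (riseEvent A ρ s N).indicator g ω := by
    filter_upwards [hAinf] with ω hω
    by_cases hsω : s < tail A Ainf ρ ω
    · have hlt : A (ρ ω) ω + s < Ainf ω := by unfold tail at hsω; linarith
      obtain ⟨t₀, ht₀⟩ := eventually_atTop.1 (hω.eventually (eventually_ge_nhds hlt))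
      obtain ⟨N, hN⟩ := exists_nat_ge (max t₀ (ρ ω))
      refine le_iSup_of_le N ?_
      have hrise : ω ∈ riseEvent A ρ s N :=
        ⟨(le_max_right _ _).trans hN, ht₀ N ((le_max_left _ _).trans hN)⟩
      rw [indicator_of_mem (s := {ω | s < tail A Ainf ρ ω}) hsω, indicator_of_mem hrise]
    · rw [indicator_of_notMem (s := {ω | s < tail A Ainf ρ ω}) hsω]
      exact zero_le
  have hsub (N : ℕ) :
      (riseEvent A ρ s N ∩ T : Set Ω) ≤ᵐ[μ] ({ω | s ≤ tail A Ainf ρ ω} ∩ T : Set Ω) := by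
    filter_upwards [ae_le_of_tendsto hAm hAinf] with ω hω ⟨⟨_, hrise⟩, hωT⟩
    refine ⟨?_, hωT⟩
    change s ≤ Ainf ω - A (ρ ω) ω
    linarith [hω N]
  calc _ ≤ ∫⁻ ω in T, ⨆ N : ℕ, (riseEvent A ρ s N).indicator g ω ∂μ :=
        lintegral_mono_ae (ae_restrict_of_ae hcover)
    _ = ⨆ N : ℕ, ∫⁻ ω in riseEvent A ρ s N ∩ T, g ω ∂μ := by
        rw [lintegral_iSup' (fun N => hg.indicator (hE N)) (ae_of_all _ fun ω N N' hNN' =>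
          indicator_le_indicator_of_subset (riseEvent_mono hAm (Nat.cast_le.2 hNN'))
            (fun _ => zero_le) ω)]
        simp_rw [setLIntegral_indicator (hE _)]
    _ ≤ C * μ.restrict T {ω | s ≤ tail A Ainf ρ ω} := iSup_le fun N =>
        (hn.setLIntegral_riseEvent_le hA hAc hAm hρ hτρ hT hs N).trans <| mul_le_mul_right
          ((measure_mono_ae (hsub N)).trans (Measure.le_restrict_apply _ _)) C

lemma TailMomentLE.succ [SFinite μ] (h1 : TailMomentLE ℱ μ A Ainf τ 1 c)
    (hn : TailMomentLE ℱ μ A Ainf τ n C) (hA : IsStronglyProgressive ℱ A)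
    (hAc : ∀ ω, Continuous fun t => A t ω) (hAm : ∀ ω, Monotone fun t => A t ω)
    (hAinf : ∀ᵐ ω ∂μ, Tendsto (fun t => A t ω) atTop (𝓝 (Ainf ω))) :
    TailMomentLE ℱ μ A Ainf τ (n + 1) ((n + 1) * C * c) := by
  intro ρ hρ hτρ T hT
  set X := tail A Ainf ρ
  have hX : AEMeasurable X (μ.restrict T) := (aemeasurable_tail hA hAinf hρ).restrict
  have hX0 : 0 ≤ᵐ[μ.restrict T] X := ae_restrict_of_ae (ae_tail_nonneg hAm hAinf)
  set F : Ω → ℝ → ℝ≥0∞ := fun ω => (Iio (X ω)).indicator fun s => ENNReal.ofReal ((X ω - s) ^ n)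
  have hF : AEMeasurable (Function.uncurry F) ((μ.restrict T).prod (volume.restrict (Ioi 0))) := by
    have hG : Measurable fun p : ℝ × ℝ =>
        (Iio p.1).indicator (fun s => ENNReal.ofReal ((p.1 - s) ^ n)) p.2 :=
      Measurable.ite (measurableSet_lt measurable_snd measurable_fst) (by fun_prop)
        measurable_const
    exact hG.comp_aemeasurable (hX.comp_fst.prodMk measurable_snd.aemeasurable)
  have hlevel : Measurable fun s => μ.restrict T {ω | s ≤ X ω} :=
    Antitone.measurable fun _ _ hss' => measure_mono fun _ hω => hss'.trans hω
  calc ∫⁻ ω in T, ENNReal.ofReal (X ω ^ (n + 1)) ∂μ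
      = ∫⁻ ω in T, (n + 1 : ℝ≥0∞) * (∫⁻ s in Ioi 0, F ω s) ∂μ :=
        lintegral_congr_ae (hX0.mono fun ω hω => (lintegral_indicator_Iio_pow_sub n hω).symm)
    _ = (n + 1) * ∫⁻ s in Ioi 0, ∫⁻ ω in T, F ω s ∂μ := by
        rw [lintegral_const_mul' _ _ (by simp), lintegral_lintegral_swap hF]
    _ ≤ (n + 1) * ∫⁻ s in Ioi 0, C * μ.restrict T {ω | s ≤ X ω} :=
        mul_le_mul_right (setLIntegral_mono' measurableSet_Ioi fun s hs =>
          hn.setLIntegral_indicator_le hA hAc hAm hAinf hρ hτρ hT (le_of_lt hs)) _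
    _ = (n + 1) * (C * ∫⁻ ω in T, ENNReal.ofReal (X ω) ∂μ) := by
        rw [lintegral_const_mul _ hlevel, lintegral_eq_lintegral_meas_le _ hX0 hX]
    _ ≤ (n + 1) * (C * (c * μ T)) := by
        gcongr
        simpa using h1 ρ hρ hτρ T hT
    _ = (n + 1) * C * c * μ T := by ring

lemma TailMomentLE.factorial_mul_pow [SFinite μ] (h1 : TailMomentLE ℱ μ A Ainf τ 1 c)
    (hA : IsStronglyProgressive ℱ A) (hAc : ∀ ω, Continuous fun t => A t ω)
    (hAm : ∀ ω, Monotone fun t => A t ω)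
    (hAinf : ∀ᵐ ω ∂μ, Tendsto (fun t => A t ω) atTop (𝓝 (Ainf ω))) (n : ℕ) :
    TailMomentLE ℱ μ A Ainf τ n (n.factorial * c ^ n) := by
  induction n with
  | zero => intro ρ hρ _ T _; simp
  | succ n ih =>
    convert h1.succ ih hA hAc hAm hAinf using 1
    push_cast [Nat.factorial_succ]
    ring

lemma tailMomentLE_one_of_condExp_le [IsFiniteMeasure μ] (hA : IsStronglyProgressive ℱ A)
    (hAm : ∀ ω, Monotone fun t => A t ω)
    (hAinf : ∀ᵐ ω ∂μ, Tendsto (fun t => A t ω) atTop (𝓝 (Ainf ω))) {b : ℝ} (hb0 : 0 ≤ b)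
    (hBMO : ∀ (ρ : Ω → ℝ) (hρ : IsStoppingTime ℱ fun ω => (ρ ω : WithTop ℝ)), (∀ ω, 0 ≤ ρ ω) →
      ∀ᵐ ω ∂μ, μ[tail A Ainf ρ | hρ.measurableSpace] ω ≤ b)
    (hτ0 : ∀ ω, 0 ≤ τ ω) (hexp : Integrable (fun ω => Real.exp (tail A Ainf τ ω)) μ) :
    TailMomentLE ℱ μ A Ainf τ 1 (ENNReal.ofReal b) := by
  intro ρ hρ hτρ T hT
  have hbound : ∀ᵐ ω ∂μ, ‖tail A Ainf ρ ω‖ ≤ Real.exp (tail A Ainf τ ω) := by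
    filter_upwards [ae_le_of_tendsto hAm hAinf] with ω hω
    have hρτ : A (τ ω) ω ≤ A (ρ ω) ω := hAm ω (hτρ ω)
    unfold tail
    rw [Real.norm_of_nonneg (sub_nonneg.2 (hω _))]
    linarith [Real.add_one_le_exp (Ainf ω - A (τ ω) ω)]
  simpa using setLIntegral_le_of_condExp_le hρ.measurableSpace_le
    (hexp.mono' (aemeasurable_tail hA hAinf hρ).aestronglyMeasurable hbound)
    (ae_tail_nonneg hAm hAinf) hb0 (hBMO ρ hρ fun ω => (hτ0 ω).trans (hτρ ω)) hT

end Moments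

end JohnNirenberg

open JohnNirenberg

theorem john_nirenberg_general
    {Ω : Type*} {m : MeasurableSpace Ω} {μ : Measure Ω} [IsProbabilityMeasure μ]
    (ℱ : Filtration ℝ m)
    (M A : ℝ → Ω → ℝ) (Ainf : Ω → ℝ) (b : ℝ)
    (hM : Martingale M ℱ μ)
    (hA : Martingale (fun t ω => (M t ω) ^ 2 - A t ω) ℱ μ)
    (hAcont : ∀ ω, Continuous fun t => A t ω)
    (hAmono : ∀ ω, Monotone fun t => A t ω)
    (hAinf : ∀ᵐ ω ∂μ, Tendsto (fun t => A t ω) atTop (nhds (Ainf ω)))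
    (hb0 : 0 ≤ b) (hb : b < 1)
    (hBMO : ∀ (τ : Ω → ℝ) (hτ : IsStoppingTime ℱ (fun ω => (τ ω : WithTop ℝ))), (∀ ω, 0 ≤ τ ω) →
      ∀ᵐ ω ∂μ, (μ[fun ω' => Ainf ω' - A (τ ω') ω' | hτ.measurableSpace]) ω ≤ b) :
    ∀ (τ : Ω → ℝ) (hτ : IsStoppingTime ℱ (fun ω => (τ ω : WithTop ℝ))), (∀ ω, 0 ≤ τ ω) →
      ∀ᵐ ω ∂μ,
        (μ[fun ω' => Real.exp (Ainf ω' - A (τ ω') ω') | hτ.measurableSpace]) ω ≤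
          1 / (1 - b) := by
  have hbound : 0 ≤ 1 / (1 - b) := one_div_nonneg.2 (sub_nonneg.2 hb.le)
  have hAadapted : StronglyAdapted ℱ A := by
    have hA_eq : A = fun t ω => M t ω * M t ω - (M t ω ^ 2 - A t ω) := by
      ext
      ring
    rw [hA_eq]
    exact (hM.stronglyAdapted.mul hM.stronglyAdapted).sub hA.stronglyAdapted
  have hAprog := hAadapted.isStronglyProgressive_of_continuous hAcont
  intro τ hτ hτ0
  by_cases hexp : Integrable (fun ω => Real.exp (Ainf ω - A (τ ω) ω)) μ
  · have hmom := (tailMomentLE_one_of_condExp_le hAprog hAmono hAinf hb0 hBMO hτ0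
      hexp).factorial_mul_pow hAprog hAcont hAmono hAinf
    refine condExp_le_of_forall_setLIntegral_le hτ.measurableSpace_le hexp
      (ae_of_all _ fun _ => (Real.exp_pos _).le) hbound fun S hS => ?_
    calc ∫⁻ ω in S, ENNReal.ofReal (Real.exp (Ainf ω - A (τ ω) ω)) ∂μ
        ≤ (1 - ENNReal.ofReal b)⁻¹ * μ S :=
          lintegral_ofReal_exp_le (X := tail A Ainf τ) (aemeasurable_tail hAprog hAinf hτ).restrict
            (ae_restrict_of_ae (ae_tail_nonneg hAmono hAinf)) fun n => hmom n τ hτ le_rfl S hS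
      _ = ENNReal.ofReal (1 / (1 - b)) * μ S := by
          rw [one_div, ENNReal.ofReal_inv_of_pos (sub_pos.2 hb), ENNReal.ofReal_sub _ hb0,
            ENNReal.ofReal_one]
  · rw [condExp_of_not_integrable hexp]
    exact ae_of_all _ fun _ => hbound

/-- John–Nirenberg inequality: if M is a continuous martingale with M₀ = 0,
    quadratic variation A = ⟨M⟩ (so that M² − A is a martingale) with limit Ainf = ⟨M⟩_∞,
    and BMO₂-norm squared at most b < 1, then for every stopping time τ,
    E[exp(⟨M⟩_∞ − ⟨M⟩_τ) | F_τ] ≤ 1/(1 − b) a.s. -/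
theorem john_nirenberg
    {Ω : Type*} {m : MeasurableSpace Ω} {μ : Measure Ω} [IsProbabilityMeasure μ]
    (ℱ : Filtration ℝ m)
    (M A : ℝ → Ω → ℝ) (Ainf : Ω → ℝ) (b : ℝ)
    (hM : Martingale M ℱ μ)
    (hMcont : ∀ ω, Continuous fun t => M t ω)
    (hM0 : ∀ ω, M 0 ω = 0)
    (hA : Martingale (fun t ω => (M t ω) ^ 2 - A t ω) ℱ μ)
    (hAcont : ∀ ω, Continuous fun t => A t ω)
    (hAmono : ∀ ω, Monotone fun t => A t ω)
    (hA0 : ∀ ω, A 0 ω = 0)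
    (hAinf : ∀ᵐ ω ∂μ, Tendsto (fun t => A t ω) atTop (nhds (Ainf ω)))
    (hb0 : 0 ≤ b) (hb : b < 1)
    (hBMO : ∀ (τ : Ω → ℝ) (hτ : IsStoppingTime ℱ (fun ω => (τ ω : WithTop ℝ))), (∀ ω, 0 ≤ τ ω) →
      ∀ᵐ ω ∂μ, (μ[fun ω' => Ainf ω' - A (τ ω') ω' | hτ.measurableSpace]) ω ≤ b) :
    ∀ (τ : Ω → ℝ) (hτ : IsStoppingTime ℱ (fun ω => (τ ω : WithTop ℝ))), (∀ ω, 0 ≤ τ ω) →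
      ∀ᵐ ω ∂μ,
        (μ[fun ω' => Real.exp (Ainf ω' - A (τ ω') ω') | hτ.measurableSpace]) ω ≤
          1 / (1 - b) :=
  john_nirenberg_general ℱ M A Ainf b hM hA hAcont hAmono hAinf hb0 hb hBMO
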